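/- arXiv:2605.20629 — 2 statements merged into one kernel-verified Lean document; each statement's English description precedes it below -/
import Mathlib

section
/- Let V be a regular vine on a finite set A whose maximal element A covers the two elements A∖{a_1} and A∖{a_2} in V, for distinct a_1, a_2 ∈ A. Let V_i := {S ∈ V : S ⊆ A∖{a_i}} for i ∈ {1,2} and V' := V_1 ∩ V_2 (these are regular vines on A∖{a_i} and A∖{a_1,a_2}, respectively). If V is a D-vine, then V_1, V_2, and V' are D-vines; if V is a C-vine, then V_1, V_2, and V' are C-vines. -/
variable {α : Type*} [DecidableEq α]

/-- `T` is covered by `S` in the family `V`, ordered by inclusion. -/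
def CoversIn (V : Set (Finset α)) (T S : Finset α) : Prop :=
  T ∈ V ∧ S ∈ V ∧ T ⊂ S ∧ ∀ U ∈ V, T ⊂ U → U ⊂ S → False

/-- `S` is a minimal element of the family `V`, ordered by inclusion. -/
def MinimalIn (V : Set (Finset α)) (S : Finset α) : Prop :=
  S ∈ V ∧ ∀ T ∈ V, T ⊆ S → T = S

/-- `C` is a maximal chain of the family `V`, ordered by inclusion. -/
def IsMaxChainIn (V C : Set (Finset α)) : Prop :=
  C ⊆ V ∧ IsChain (· ⊆ ·) C ∧ ∀ S ∈ V, IsChain (· ⊆ ·) (insert S C) → S ∈ C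

/-- The `i`-th associated graph of a family `V`: vertices are the elements of `V`
of cardinality `i`, and each element of `V` of cardinality `i+1` is an edge
joining the two elements it covers. -/
def vineGraph (V : Set (Finset α)) (i : ℕ) :
    SimpleGraph {S : Finset α // S ∈ V ∧ S.card = i} where
  Adj S T := S ≠ T ∧ ∃ W ∈ V, W.card = i + 1 ∧ CoversIn V S.1 W ∧ CoversIn V T.1 W
  symm := by
    constructor
    rintro S T ⟨h, W, hW, hc, h1, h2⟩
    exact ⟨h.symm, W, hW, hc, h2, h1⟩
  loopless := by
    constructor
    rintro S ⟨h, -⟩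
    exact h rfl

/-- A regular vine on a finite set `A` (poset definition): a family of nonempty
subsets of `A` such that (1) all maximal chains have length `|A| - 1` and all
minimal elements are singletons, (2) there are exactly `|A|` minimal elements,
(3) every non-minimal element covers exactly two elements, (4) each associated
graph is a tree, and (5) proximity holds. -/
def IsRegularVine (A : Finset α) (V : Set (Finset α)) : Prop :=
  (∀ S ∈ V, S ⊆ A ∧ S.Nonempty) ∧
  (∀ C : Set (Finset α), IsMaxChainIn V C → C.ncard = A.card) ∧
  (∀ S, MinimalIn V S → S.card = 1) ∧
  {S | MinimalIn V S}.ncard = A.card ∧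
  (∀ S ∈ V, (∃ T ∈ V, T ⊂ S) → {T | CoversIn V T S}.ncard = 2) ∧
  (∀ i : ℕ, 1 ≤ i → i ≤ A.card - 1 → (vineGraph V i).IsTree) ∧
  (∀ S ∈ V, ∀ T ∈ V, S ≠ T → S.card = T.card → 2 ≤ S.card →
    (∃ W, CoversIn V S W ∧ CoversIn V T W) → ∃ U, CoversIn V U S ∧ CoversIn V U T)

/-- A simple graph is a path graph if its vertices can be enumerated by a
duplicate-free list covering all vertices such that adjacency holds exactly
between consecutive entries. -/
def IsPathGraph {β : Type*} (G : SimpleGraph β) : Prop :=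
  ∃ l : List β, l.Nodup ∧ (∀ v : β, v ∈ l) ∧
    ∀ u v : β, G.Adj u v ↔
      ∃ i : ℕ, (l[i]? = some u ∧ l[i + 1]? = some v) ∨
        (l[i]? = some v ∧ l[i + 1]? = some u)

/-- A simple graph is a star graph if there is a center adjacent exactly to
all other vertices, with no further edges. -/
def IsStarGraph {β : Type*} (G : SimpleGraph β) : Prop :=
  ∃ c : β, ∀ u v : β, G.Adj u v ↔ ((u = c ∧ v ≠ c) ∨ (v = c ∧ u ≠ c))

/-- A D-vine: a regular vine all of whose associated trees are path graphs. -/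
def IsDVine (A : Finset α) (V : Set (Finset α)) : Prop :=
  IsRegularVine A V ∧
    ∀ i : ℕ, 1 ≤ i → i ≤ A.card - 1 → IsPathGraph (vineGraph V i)

/-- A C-vine: a regular vine all of whose associated trees are star graphs. -/
def IsCVine (A : Finset α) (V : Set (Finset α)) : Prop :=
  IsRegularVine A V ∧
    ∀ i : ℕ, 1 ≤ i → i ≤ A.card - 1 → IsStarGraph (vineGraph V i)

/-! For `X ∈ V`, the elements of `V` contained in `X` form a regular vine on `X`, and each of its
associated trees embeds, as an induced subgraph, into the corresponding tree of `V`. That subgraph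
is connected: by induction on `|X|`, every vertex lies below one of the two elements covered by
`X`, and these two share the vertices below their intersection. A connected induced subgraph of a
path is a path, and one of a star is a star. Finally `A ∖ {a₁}` and `A ∖ {a₂}` lie in `V`, and by
proximity so does their intersection `A ∖ {a₁, a₂}` unless it is empty. -/

section Graphs
variable {β γ : Type*} {G : SimpleGraph β} {H : SimpleGraph γ}

lemma List.getElem?_ofFn_symm_eq_some_iff {n : ℕ} (e : β ≃ Fin n) {i : ℕ} {u : β} :
    (List.ofFn e.symm)[i]? = some u ↔ (e u : ℕ) = i := by
  rw [List.getElem?_ofFn]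
  split_ifs with hi
  · rw [Option.some_inj, Equiv.symm_apply_eq, Fin.ext_iff, eq_comm]
  · simp only [false_iff]
    exact fun h => hi (h ▸ (e u).2)

lemma isPathGraph_iff_exists_equiv :
    IsPathGraph G ↔ ∃ (n : ℕ) (e : β ≃ Fin n),
      ∀ u v, G.Adj u v ↔ (e u : ℕ) + 1 = e v ∨ (e v : ℕ) + 1 = e u := by
  classical
  constructor
  · rintro ⟨l, hnd, hmem, hadj⟩
    let e := (List.Nodup.getEquivOfForallMemList l hnd hmem).symm
    have hl : ∀ i u, l[i]? = some u ↔ (e u : ℕ) = i := fun i u => by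
      conv_lhs => rw [← List.ofFn_get l]
      exact List.getElem?_ofFn_symm_eq_some_iff e
    refine ⟨l.length, e, fun u v => ?_⟩
    simp only [hadj, hl]
    grind
  · rintro ⟨n, e, hadj⟩
    refine ⟨List.ofFn e.symm, List.nodup_ofFn.2 e.symm.injective,
      fun v => (List.mem_ofFn' _ _).2 (e.symm.surjective v), fun u v => ?_⟩
    simp only [hadj, List.getElem?_ofFn_symm_eq_some_iff]
    grind

lemma SimpleGraph.Walk.exists_mem_support_eq (p : β → ℕ)
    (hp : ∀ x y, G.Adj x y → p y ≤ p x + 1) {u w : β} (c : G.Walk u w) {k : ℕ}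
    (hu : p u ≤ k) (hw : k ≤ p w) : ∃ x ∈ c.support, p x = k := by
  induction c with
  | nil => exact ⟨_, List.mem_singleton_self _, by omega⟩
  | @cons x y w h c ih =>
    rcases hu.eq_or_lt with hx | hx
    · exact ⟨x, c.support.mem_cons_self, hx⟩
    · obtain ⟨z, hz, hzk⟩ := ih (by have := hp x y h; omega) hw
      exact ⟨z, List.mem_cons_of_mem _ hz, hzk⟩

/-- Along walks `p` moves in unit steps, so by connectedness its range is an interval, which `e`
renumbers from `0`. -/
lemma isPathGraph_of_injective [Finite γ] (hH : H.Connected) (p : γ → ℕ)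
    (hp : Function.Injective p) (hadj : ∀ u v, H.Adj u v ↔ p u + 1 = p v ∨ p v + 1 = p u) :
    IsPathGraph H := by
  have : Nonempty γ := hH.nonempty
  obtain ⟨x₀, hx₀⟩ := Finite.exists_min p
  obtain ⟨x₁, hx₁⟩ := Finite.exists_max p
  have hsurj : ∀ k, p x₀ ≤ k → k ≤ p x₁ → ∃ x, p x = k := fun k h₀ h₁ =>
    have ⟨c⟩ := hH.preconnected x₀ x₁
    have ⟨x, _, hx⟩ := c.exists_mem_support_eq p
      (fun x y h => by rcases (hadj x y).1 h with h | h <;> omega) h₀ h₁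
    ⟨x, hx⟩
  let e : γ ≃ Fin (p x₁ + 1 - p x₀) := Equiv.ofBijective
    (fun x => ⟨p x - p x₀, by have := hx₁ x; have := hx₀ x; omega⟩)
    ⟨fun x y h => hp (by have := hx₀ x; have := hx₀ y; simp only [Fin.mk.injEq] at h; omega),
      fun k => by
        obtain ⟨x, hx⟩ := hsurj (p x₀ + k) (by omega) (by omega)
        exact ⟨x, Fin.ext (by simp only; omega)⟩⟩
  have he : ∀ x, (e x : ℕ) = p x - p x₀ := fun _ => rfl
  refine isPathGraph_iff_exists_equiv.2 ⟨_, e, fun u v => ?_⟩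
  have := hx₀ u; have := hx₀ v
  simp only [hadj, he]
  omega

lemma IsPathGraph.of_embedding (f : H ↪g G) (hH : H.Connected) (hG : IsPathGraph G) :
    IsPathGraph H := by
  obtain ⟨n, e, hadj⟩ := isPathGraph_iff_exists_equiv.1 hG
  have : Finite γ := Finite.of_injective _ (e.injective.comp f.injective)
  exact isPathGraph_of_injective hH (fun x => e (f x)) (Fin.val_injective.comp
    (e.injective.comp f.injective)) fun u v => by rw [← f.map_adj_iff, hadj]

lemma IsStarGraph.of_embedding (f : H ↪g G) (hH : H.Connected) (hG : IsStarGraph G) :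
    IsStarGraph H := by
  obtain ⟨c, hc⟩ := hG
  by_cases hcf : ∃ c', f c' = c
  · obtain ⟨c', rfl⟩ := hcf
    exact ⟨c', fun u v => by simp only [← f.map_adj_iff, hc, f.injective.eq_iff, ne_eq]⟩
  · have hnadj : ∀ u v, ¬ H.Adj u v := fun u v h => by
      rcases (hc _ _).1 (f.map_adj_iff.2 h) with ⟨h, -⟩ | ⟨h, -⟩ <;> exact hcf ⟨_, h⟩
    have hsub : ∀ u v : γ, u = v := fun u v => by
      obtain ⟨c⟩ := hH.preconnected u v
      cases c with
      | nil => rfl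
      | cons h _ => exact (hnadj _ _ h).elim
    obtain ⟨c'⟩ := hH.nonempty
    exact ⟨c', fun u v => by simp [hsub u c', hsub v c']⟩

end Graphs

section
omit [DecidableEq α]

lemma IsChain.subset_of_card_le {C : Set (Finset α)} (hC : IsChain (· ⊆ ·) C) {S T : Finset α}
    (hS : S ∈ C) (hT : T ∈ C) (h : S.card ≤ T.card) : S ⊆ T := by
  rcases hC.total hS hT with h' | h'
  · exact h'
  · exact (Finset.eq_of_subset_of_card_le h' h).ge

lemma IsChain.injOn_card {C : Set (Finset α)} (hC : IsChain (· ⊆ ·) C) :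
    Set.InjOn Finset.card C := fun _ hS _ hT h =>
  (hC.subset_of_card_le hS hT h.le).antisymm (hC.subset_of_card_le hT hS h.ge)

lemma exists_isMaxChainIn {V C₀ : Set (Finset α)} (hV : V.Finite) (h₀ : C₀ ⊆ V)
    (hc₀ : IsChain (· ⊆ ·) C₀) : ∃ C, IsMaxChainIn V C ∧ C₀ ⊆ C := by
  have hfin : {C | C ⊆ V ∧ IsChain (· ⊆ ·) C}.Finite :=
    hV.finite_subsets.subset fun C hC => hC.1
  obtain ⟨C, hC₀C, hC⟩ := hfin.exists_le_maximal ⟨h₀, hc₀⟩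
  refine ⟨C, ⟨hC.prop.1, hC.prop.2, fun S hS hSC => ?_⟩, hC₀C⟩
  rw [hC.eq_of_subset ⟨Set.insert_subset hS hC.prop.1, hSC⟩ (Set.subset_insert S C)]
  exact Set.mem_insert S C

lemma coversIn_restrict_iff {V : Set (Finset α)} {X S T : Finset α} (hSX : S ⊆ X) :
    CoversIn {S ∈ V | S ⊆ X} T S ↔ CoversIn V T S := by
  constructor
  · rintro ⟨hT, hS, hTS, hmin⟩
    exact ⟨hT.1, hS.1, hTS, fun U hU h₁ h₂ => hmin U ⟨hU, h₂.subset.trans hSX⟩ h₁ h₂⟩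
  · rintro ⟨hT, hS, hTS, hmin⟩
    exact ⟨⟨hT, hTS.subset.trans hSX⟩, ⟨hS, hSX⟩, hTS, fun U hU => hmin U hU.1⟩

lemma minimalIn_restrict_iff {V : Set (Finset α)} {X S : Finset α} :
    MinimalIn {S ∈ V | S ⊆ X} S ↔ MinimalIn V S ∧ S ⊆ X := by
  constructor
  · rintro ⟨⟨hS, hSX⟩, hmin⟩
    exact ⟨⟨hS, fun T hT hTS => hmin T ⟨hT, hTS.trans hSX⟩ hTS⟩, hSX⟩
  · rintro ⟨⟨hS, hmin⟩, hSX⟩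
    exact ⟨⟨hS, hSX⟩, fun T hT => hmin T hT.1⟩

abbrev VineVertex (V : Set (Finset α)) (i : ℕ) := {S : Finset α // S ∈ V ∧ S.card = i}

def VineVertex.ofRestrict {V : Set (Finset α)} {X : Finset α} {i : ℕ}
    (u : VineVertex {S ∈ V | S ⊆ X} i) : VineVertex V i :=
  ⟨u.1, u.2.1.1, u.2.2⟩

lemma VineVertex.ofRestrict_injective {V : Set (Finset α)} {X : Finset α} {i : ℕ} :
    Function.Injective (VineVertex.ofRestrict (V := V) (X := X) (i := i)) :=
  fun _ _ h => Subtype.ext (Subtype.mk.inj h)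

namespace IsRegularVine
variable {A X S T : Finset α} {V : Set (Finset α)}

lemma subset_of_mem (hV : IsRegularVine A V) (hS : S ∈ V) : S ⊆ A := (hV.1 S hS).1

lemma nonempty_of_mem (hV : IsRegularVine A V) (hS : S ∈ V) : S.Nonempty := (hV.1 S hS).2

lemma finite (hV : IsRegularVine A V) : V.Finite :=
  A.powerset.finite_toSet.subset fun _ hS => by simpa using hV.subset_of_mem hS

lemma card_image_of_isMaxChainIn (hV : IsRegularVine A V) {C : Set (Finset α)}
    (hC : IsMaxChainIn V C) : Finset.card '' C = Set.Icc 1 A.card := by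
  have hsub : Finset.card '' C ⊆ Set.Icc 1 A.card := by
    rintro _ ⟨S, hS, rfl⟩
    exact ⟨(hV.nonempty_of_mem (hC.1 hS)).card_pos,
      Finset.card_le_card (hV.subset_of_mem (hC.1 hS))⟩
  have ⟨_, hchain, _⟩ := hV
  refine Set.eq_of_subset_of_ncard_le hsub ?_ (Set.finite_Icc 1 A.card)
  rw [hC.2.1.injOn_card.ncard_image, hchain C hC, Set.ncard_Icc_nat]
  omega

lemma exists_between_card_eq (hV : IsRegularVine A V) (hS : S ∈ V) (hX : X ∈ V) (hSX : S ⊆ X)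
    {i : ℕ} (hSi : S.card ≤ i) (hiX : i ≤ X.card) : ∃ U ∈ V, S ⊆ U ∧ U ⊆ X ∧ U.card = i := by
  obtain ⟨C, hC, hSXC⟩ :=
    exists_isMaxChainIn hV.finite (Set.insert_subset hS (Set.singleton_subset_iff.2 hX))
      (IsChain.pair hSX)
  have hSC : S ∈ C := hSXC (Set.mem_insert S _)
  have hXC : X ∈ C := hSXC (Set.mem_insert_of_mem S rfl)
  have hi : i ∈ Finset.card '' C := by
    rw [hV.card_image_of_isMaxChainIn hC]
    exact ⟨(hV.nonempty_of_mem hS).card_pos.trans_le hSi,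
      hiX.trans (Finset.card_le_card (hV.subset_of_mem hX))⟩
  obtain ⟨U, hUC, rfl⟩ := hi
  exact ⟨U, hC.1 hUC, hC.2.1.subset_of_card_le hSC hUC hSi,
    hC.2.1.subset_of_card_le hUC hXC hiX, rfl⟩

lemma card_add_one_of_coversIn (hV : IsRegularVine A V) (h : CoversIn V T S) :
    T.card + 1 = S.card := by
  obtain ⟨hT, hS, hTS, hmin⟩ := h
  have hlt := Finset.card_lt_card hTS
  obtain ⟨U, hU, hTU, hUS, hUc⟩ :=
    hV.exists_between_card_eq hT hS hTS.subset (i := S.card - 1) (by omega) (by omega)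
  obtain rfl : T = U := by
    by_contra hne
    exact hmin U hU (hTU.ssubset_of_ne hne) (hUS.ssubset_of_ne (by rintro rfl; omega))
  omega

lemma exists_coversIn_superset (hV : IsRegularVine A V) (hS : S ∈ V) (hX : X ∈ V)
    (hSX : S ⊂ X) : ∃ T, CoversIn V T X ∧ S ⊆ T := by
  have hlt := Finset.card_lt_card hSX
  obtain ⟨U, hU, hSU, hUX, hUc⟩ :=
    hV.exists_between_card_eq hS hX hSX.subset (i := X.card - 1) (by omega) (by omega)
  refine ⟨U, ⟨hU, hX, hUX.ssubset_of_ne (by rintro rfl; omega), fun W _ hUW hWX => ?_⟩, hSU⟩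
  have := Finset.card_lt_card hUW
  have := Finset.card_lt_card hWX
  omega

lemma setOf_minimalIn_eq (hV : IsRegularVine A V) :
    {S | MinimalIn V S} = (fun a => ({a} : Finset α)) '' A := by
  have ⟨_, _, hmin, hcard, _⟩ := hV
  have hsub : {S | MinimalIn V S} ⊆ (fun a => ({a} : Finset α)) '' A := by
    intro S hS
    obtain ⟨a, rfl⟩ := Finset.card_eq_one.1 (hmin S hS)
    exact ⟨a, by simpa using hV.subset_of_mem hS.1, rfl⟩
  refine Set.eq_of_subset_of_ncard_le hsub ?_ (A.finite_toSet.image _)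
  rw [Set.ncard_image_of_injective _ Finset.singleton_injective, Set.ncard_coe_finset, hcard]

lemma minimalIn_iff (hV : IsRegularVine A V) : MinimalIn V S ↔ ∃ a ∈ A, {a} = S :=
  Set.ext_iff.1 hV.setOf_minimalIn_eq S

lemma exists_subset_card_eq (hV : IsRegularVine A V) (hX : X ∈ V) {i : ℕ} (hi : 1 ≤ i)
    (hiX : i ≤ X.card) : ∃ Z ∈ V, Z ⊆ X ∧ Z.card = i := by
  obtain ⟨a, ha⟩ := hV.nonempty_of_mem hX
  obtain ⟨Z, hZ, -, hZX, hZc⟩ := hV.exists_between_card_eq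
    (hV.minimalIn_iff.2 ⟨a, hV.subset_of_mem hX ha, rfl⟩).1 hX (Finset.singleton_subset_iff.2 ha)
    (by simpa using hi) hiX
  exact ⟨Z, hZ, hZX, hZc⟩

lemma exists_coversIn_pair (hV : IsRegularVine A V) (hS : S ∈ V) (h2 : 2 ≤ S.card) :
    ∃ T₁ T₂, T₁ ≠ T₂ ∧ ∀ U, CoversIn V U S ↔ U = T₁ ∨ U = T₂ := by
  obtain ⟨Z, hZ, hZS, hZc⟩ := hV.exists_subset_card_eq hS le_rfl (by omega : 1 ≤ S.card)
  have hZS' : Z ⊂ S := hZS.ssubset_of_ne (by rintro rfl; omega)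
  have ⟨_, _, _, _, hcov, _⟩ := hV
  obtain ⟨T₁, T₂, hne, h⟩ := Set.ncard_eq_two.1 (hcov S hS ⟨Z, hZ, hZS'⟩)
  exact ⟨T₁, T₂, hne, fun U => Set.ext_iff.1 h U⟩

lemma ncard_of_isMaxChainIn_restrict (hV : IsRegularVine A V) (hX : X ∈ V)
    {C : Set (Finset α)} (hC : IsMaxChainIn {S ∈ V | S ⊆ X} C) : C.ncard = X.card := by
  have hCV : C ⊆ V := fun S hS => (hC.1 hS).1
  have hXC : X ∈ C := hC.2.2 X ⟨hX, subset_rfl⟩ (hC.2.1.insert fun S hS _ => Or.inr (hC.1 hS).2)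
  obtain ⟨D, hD, hCD⟩ := exists_isMaxChainIn hV.finite hCV hC.2.1
  have himage : Finset.card '' C = Set.Icc 1 X.card := by
    refine Set.Subset.antisymm ?_ fun j hj => ?_
    · rintro _ ⟨S, hS, rfl⟩
      exact ⟨(hV.nonempty_of_mem (hCV hS)).card_pos, Finset.card_le_card (hC.1 hS).2⟩
    · obtain ⟨Y, hYD, rfl⟩ : j ∈ Finset.card '' D := by
        rw [hV.card_image_of_isMaxChainIn hD]
        exact ⟨hj.1, hj.2.trans (Finset.card_le_card (hV.subset_of_mem hX))⟩
      have hYX := hD.2.1.subset_of_card_le hYD (hCD hXC) hj.2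
      exact ⟨Y, hC.2.2 Y ⟨hD.1 hYD, hYX⟩
        (hC.2.1.insert fun Z hZ _ => hD.2.1.total hYD (hCD hZ)), rfl⟩
  rw [← hC.2.1.injOn_card.ncard_image, himage, Set.ncard_Icc_nat]
  omega

lemma restrict_empty (hV : IsRegularVine A V) : {S ∈ V | S ⊆ ∅} = ∅ :=
  Set.eq_empty_of_forall_notMem fun _ ⟨hS, hSe⟩ =>
    (hV.nonempty_of_mem hS).ne_empty (Finset.subset_empty.1 hSe)

end IsRegularVine

lemma isRegularVine_empty : IsRegularVine (∅ : Finset α) ∅ := by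
  refine ⟨?_, ?_, ?_, ?_, ?_, fun i hi hi' => by simp at hi'; omega, ?_⟩ <;>
    simp [IsMaxChainIn, MinimalIn]

lemma isDVine_empty : IsDVine (∅ : Finset α) ∅ :=
  ⟨isRegularVine_empty, fun i hi hi' => by simp at hi'; omega⟩

lemma isCVine_empty : IsCVine (∅ : Finset α) ∅ :=
  ⟨isRegularVine_empty, fun i hi hi' => by simp at hi'; omega⟩

end

lemma Finset.erase_inter_erase (s : Finset α) (a b : α) : s.erase a ∩ s.erase b = s \ {a, b} := by
  grind

namespace IsRegularVine
variable {A X Y S T : Finset α} {V : Set (Finset α)} {i : ℕ}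

lemma union_eq_of_coversIn (hV : IsRegularVine A V) {T₁ T₂ : Finset α}
    (h₁ : CoversIn V T₁ S) (h₂ : CoversIn V T₂ S) (hne : T₁ ≠ T₂) : T₁ ∪ T₂ = S := by
  have hc₁ := hV.card_add_one_of_coversIn h₁
  have hc₂ := hV.card_add_one_of_coversIn h₂
  refine Finset.eq_of_subset_of_card_le (Finset.union_subset h₁.2.2.1.subset h₂.2.2.1.subset) ?_
  by_contra hlt
  have h : T₁ = T₁ ∪ T₂ := Finset.eq_of_subset_of_card_le Finset.subset_union_left (by omega)
  have h₂₁ : T₂ ⊆ T₁ := h ▸ Finset.subset_union_right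
  exact hne (Finset.eq_of_subset_of_card_le h₂₁ (by omega)).symm

/-- By proximity the siblings cover a common element, which by counting is their intersection. -/
lemma inter_coversIn (hV : IsRegularVine A V) {X₁ X₂ : Finset α} (h₁ : CoversIn V X₁ X)
    (h₂ : CoversIn V X₂ X) (hne : X₁ ≠ X₂) (h2 : 2 ≤ X₁.card) :
    CoversIn V (X₁ ∩ X₂) X₁ ∧ CoversIn V (X₁ ∩ X₂) X₂ := by
  have hc₁ := hV.card_add_one_of_coversIn h₁
  have hc₂ := hV.card_add_one_of_coversIn h₂
  have ⟨_, _, _, _, _, _, hprox⟩ := hV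
  obtain ⟨U, hU₁, hU₂⟩ := hprox X₁ h₁.1 X₂ h₂.1 hne (by omega) h2 ⟨X, h₁, h₂⟩
  have hcU := hV.card_add_one_of_coversIn hU₁
  have hinter : (X₁ ∩ X₂).card + 1 = X₁.card := by
    have := Finset.card_union_add_card_inter X₁ X₂
    rw [hV.union_eq_of_coversIn h₁ h₂ hne] at this
    omega
  obtain rfl : U = X₁ ∩ X₂ := Finset.eq_of_subset_of_card_le
    (Finset.subset_inter hU₁.2.2.1.subset hU₂.2.2.1.subset) (by omega)
  exact ⟨hU₁, hU₂⟩

lemma vineGraph_restrict_adj_iff (hV : IsRegularVine A V) {u v : VineVertex {S ∈ V | S ⊆ X} i} :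
    (vineGraph {S ∈ V | S ⊆ X} i).Adj u v ↔ (vineGraph V i).Adj u.ofRestrict v.ofRestrict := by
  constructor
  · rintro ⟨hne, W, hW, hc, hu, hv⟩
    exact ⟨fun h => hne (VineVertex.ofRestrict_injective h), W, hW.1, hc,
      (coversIn_restrict_iff hW.2).1 hu, (coversIn_restrict_iff hW.2).1 hv⟩
  · rintro ⟨hne, W, hW, hc, hu, hv⟩
    have huv : u.1 ≠ v.1 := fun h => hne (Subtype.ext h)
    have hWX : W ⊆ X := hV.union_eq_of_coversIn hu hv huv ▸ Finset.union_subset u.2.1.2 v.2.1.2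
    exact ⟨fun h => huv (congrArg Subtype.val h), W, ⟨hW, hWX⟩, hc,
      (coversIn_restrict_iff hWX).2 hu, (coversIn_restrict_iff hWX).2 hv⟩

def restrictEmbedding (hV : IsRegularVine A V) (X : Finset α) (i : ℕ) :
    vineGraph {S ∈ V | S ⊆ X} i ↪g vineGraph V i where
  toFun := VineVertex.ofRestrict
  inj' := VineVertex.ofRestrict_injective
  map_rel_iff' := hV.vineGraph_restrict_adj_iff.symm

def restrictHom (hV : IsRegularVine A V) (hYX : Y ⊆ X) (i : ℕ) :
    vineGraph {S ∈ V | S ⊆ Y} i →g vineGraph {S ∈ V | S ⊆ X} i where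
  toFun u := ⟨u.1, ⟨u.2.1.1, u.2.1.2.trans hYX⟩, u.2.2⟩
  map_rel' h := hV.vineGraph_restrict_adj_iff.2 ((hV.vineGraph_restrict_adj_iff (X := Y)).1 h)

theorem preconnected_vineGraph_restrict (hV : IsRegularVine A V) {X : Finset α} (hX : X ∈ V)
    (hi : 1 ≤ i) :
    (vineGraph {S ∈ V | S ⊆ X} i).Preconnected := by
  intro u v
  by_cases hXi : X.card ≤ i
  · have hX : ∀ w : VineVertex {S ∈ V | S ⊆ X} i, w.1 = X := fun w =>
      Finset.eq_of_subset_of_card_le w.2.1.2 (by rw [w.2.2]; exact hXi)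
    rw [Subtype.ext ((hX u).trans (hX v).symm)]
  obtain ⟨X₁, X₂, hne, hcov⟩ := hV.exists_coversIn_pair hX (by omega)
  have h₁ := (hcov X₁).2 (Or.inl rfl)
  have h₂ := (hcov X₂).2 (Or.inr rfl)
  have hc₁ := hV.card_add_one_of_coversIn h₁
  have hc₂ := hV.card_add_one_of_coversIn h₂
  have hbelow : ∀ w : VineVertex {S ∈ V | S ⊆ X} i, w.1 ⊆ X₁ ∨ w.1 ⊆ X₂ := fun w => by
    have hwX : w.1 ⊂ X := w.2.1.2.ssubset_of_ne fun h => by have := w.2.2; rw [h] at this; omega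
    obtain ⟨T, hT, hwT⟩ := hV.exists_coversIn_superset w.2.1.1 hX hwX
    rcases (hcov T).1 hT with rfl | rfl
    exacts [Or.inl hwT, Or.inr hwT]
  have hlift : ∀ {Y}, CoversIn V Y X → ∀ u v : VineVertex {S ∈ V | S ⊆ X} i,
      u.1 ⊆ Y → v.1 ⊆ Y → (vineGraph {S ∈ V | S ⊆ X} i).Reachable u v :=
    fun hY u v hu hv => (hV.preconnected_vineGraph_restrict hY.1 hi
      ⟨u.1, ⟨u.2.1.1, hu⟩, u.2.2⟩ ⟨v.1, ⟨v.2.1.1, hv⟩, v.2.2⟩).map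
      (hV.restrictHom hY.2.2.1.subset i)
  have hcross : ∀ u v : VineVertex {S ∈ V | S ⊆ X} i, u.1 ⊆ X₁ → v.1 ⊆ X₂ →
      (vineGraph {S ∈ V | S ⊆ X} i).Reachable u v := fun u v hu hv => by
    by_cases htop : i + 1 = X.card
    · have hu₁ : u.1 = X₁ := Finset.eq_of_subset_of_card_le hu (by rw [u.2.2]; omega)
      have hv₂ : v.1 = X₂ := Finset.eq_of_subset_of_card_le hv (by rw [v.2.2]; omega)
      refine SimpleGraph.Adj.reachable ⟨fun h => hne ?_, X, ⟨hX, subset_rfl⟩, htop.symm, ?_, ?_⟩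
      · rw [← hu₁, ← hv₂, h]
      · rw [coversIn_restrict_iff subset_rfl, hu₁]; exact h₁
      · rw [coversIn_restrict_iff subset_rfl, hv₂]; exact h₂
    · obtain ⟨hI₁, hI₂⟩ := hV.inter_coversIn h₁ h₂ hne (by omega)
      have hcI := hV.card_add_one_of_coversIn hI₁
      obtain ⟨Z, hZ, hZI, hZc⟩ := hV.exists_subset_card_eq hI₁.1 hi (by omega)
      have hZ₁ : Z ⊆ X₁ := hZI.trans Finset.inter_subset_left
      have hZ₂ : Z ⊆ X₂ := hZI.trans Finset.inter_subset_right
      let w : VineVertex {S ∈ V | S ⊆ X} i := ⟨Z, ⟨hZ, hZ₁.trans h₁.2.2.1.subset⟩, hZc⟩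
      exact (hlift h₁ u w hu hZ₁).trans (hlift h₂ w v hZ₂ hv)
  rcases hbelow u with hu | hu <;> rcases hbelow v with hv | hv
  · exact hlift h₁ u v hu hv
  · exact hcross u v hu hv
  · exact (hcross v u hv hu).symm
  · exact hlift h₂ u v hu hv
termination_by X.card
decreasing_by exact Finset.card_lt_card hY.2.2.1

theorem connected_vineGraph_restrict (hV : IsRegularVine A V) (hX : X ∈ V) (hi : 1 ≤ i)
    (hiX : i ≤ X.card) : (vineGraph {S ∈ V | S ⊆ X} i).Connected := by
  obtain ⟨Z, hZ, hZX, hZc⟩ := hV.exists_subset_card_eq hX hi hiX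
  exact (SimpleGraph.connected_iff _).2
    ⟨hV.preconnected_vineGraph_restrict hX hi, ⟨⟨Z, ⟨hZ, hZX⟩, hZc⟩⟩⟩

theorem restrict (hV : IsRegularVine A V) (hX : X ∈ V) : IsRegularVine X {S ∈ V | S ⊆ X} := by
  have ⟨_, _, hmin, _, hcov, htree, hprox⟩ := hV
  have hXA : X.card ≤ A.card := Finset.card_le_card (hV.subset_of_mem hX)
  refine ⟨fun S hS => ⟨hS.2, hV.nonempty_of_mem hS.1⟩, fun C => hV.ncard_of_isMaxChainIn_restrict hX,
    fun S hS => hmin S (minimalIn_restrict_iff.1 hS).1, ?_, ?_, fun j hj hjX => ?_, ?_⟩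
  · have : {S | MinimalIn {S ∈ V | S ⊆ X} S} = (fun a => ({a} : Finset α)) '' X := by
      ext S
      change MinimalIn _ S ↔ _
      rw [minimalIn_restrict_iff, hV.minimalIn_iff]
      constructor
      · rintro ⟨⟨a, -, rfl⟩, haX⟩
        exact ⟨a, by simpa using haX, rfl⟩
      · rintro ⟨a, ha, rfl⟩
        exact ⟨⟨a, hV.subset_of_mem hX ha, rfl⟩, by simpa using ha⟩
    rw [this, Set.ncard_image_of_injective _ Finset.singleton_injective, Set.ncard_coe_finset]
  · intro S hS hS'
    obtain ⟨T, hT, hTS⟩ := hS'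
    rw [← hcov S hS.1 ⟨T, hT.1, hTS⟩]
    congr 1
    ext T
    exact coversIn_restrict_iff hS.2
  · refine ⟨hV.connected_vineGraph_restrict hX hj (by omega), ?_⟩
    exact (htree j hj (by omega)).2.embedding (hV.restrictEmbedding X j)
  · rintro S hS T hT hne hcard h2 ⟨W, hSW, hTW⟩
    obtain ⟨U, hUS, hUT⟩ := hprox S hS.1 T hT.1 hne hcard h2
      ⟨W, (coversIn_restrict_iff hSW.2.1.2).1 hSW, (coversIn_restrict_iff hSW.2.1.2).1 hTW⟩
    exact ⟨U, (coversIn_restrict_iff hS.2).2 hUS, (coversIn_restrict_iff hT.2).2 hUT⟩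

lemma sdiff_pair_mem_or_eq_empty (hV : IsRegularVine A V) {a₁ a₂ : α} (hne : a₁ ≠ a₂)
    (h₁ : CoversIn V (A.erase a₁) A) (h₂ : CoversIn V (A.erase a₂) A) :
    A \ {a₁, a₂} ∈ V ∨ A \ {a₁, a₂} = ∅ := by
  have ha₂ : a₂ ∈ A.erase a₁ := by
    refine Finset.mem_erase.2 ⟨hne.symm, ?_⟩
    by_contra h
    exact h₂.2.2.1.ne (Finset.erase_eq_of_notMem h)
  have hE₁ : A.erase a₁ ∩ A.erase a₂ ⊂ A.erase a₁ :=
    (Finset.ssubset_iff_of_subset Finset.inter_subset_left).2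
      ⟨a₂, ha₂, fun h => Finset.notMem_erase a₂ A (Finset.mem_inter.1 h).2⟩
  rw [← Finset.erase_inter_erase]
  by_cases h2 : 2 ≤ (A.erase a₁).card
  · have hne' : A.erase a₁ ≠ A.erase a₂ := fun h => hE₁.ne (by rw [← h, Finset.inter_self])
    exact Or.inl (hV.inter_coversIn h₁ h₂ hne' h2).1.1
  · have := Finset.card_lt_card hE₁
    exact Or.inr (Finset.card_eq_zero.1 (by omega))

end IsRegularVine

theorem IsDVine.restrict {A X : Finset α} {V : Set (Finset α)} (h : IsDVine A V) (hX : X ∈ V) :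
    IsDVine X {S ∈ V | S ⊆ X} := by
  refine ⟨h.1.restrict hX, fun i hi hiX => ?_⟩
  have hXA := Finset.card_le_card (h.1.subset_of_mem hX)
  exact (h.2 i hi (by omega)).of_embedding (h.1.restrictEmbedding X i)
    (h.1.connected_vineGraph_restrict hX hi (by omega))

theorem IsCVine.restrict {A X : Finset α} {V : Set (Finset α)} (h : IsCVine A V) (hX : X ∈ V) :
    IsCVine X {S ∈ V | S ⊆ X} := by
  refine ⟨h.1.restrict hX, fun i hi hiX => ?_⟩
  have hXA := Finset.card_le_card (h.1.subset_of_mem hX)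
  exact (h.2 i hi (by omega)).of_embedding (h.1.restrictEmbedding X i)
    (h.1.connected_vineGraph_restrict hX hi (by omega))

/-- Splitting a D-vine (resp. C-vine) `V` at the two elements covered by its
maximal element gives D-vines (resp. C-vines) `V₁`, `V₂`, and `V' = V₁ ∩ V₂`. -/
theorem dvine_cvine_splitting (A : Finset α) (V : Set (Finset α))
    (hV : IsRegularVine A V) (a₁ a₂ : α) (hne : a₁ ≠ a₂)
    (h₁ : CoversIn V (A.erase a₁) A) (h₂ : CoversIn V (A.erase a₂) A) :
    (IsDVine A V →
      IsDVine (A.erase a₁) {S ∈ V | S ⊆ A.erase a₁} ∧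
      IsDVine (A.erase a₂) {S ∈ V | S ⊆ A.erase a₂} ∧
      IsDVine (A \ {a₁, a₂})
        ({S ∈ V | S ⊆ A.erase a₁} ∩ {S ∈ V | S ⊆ A.erase a₂})) ∧
    (IsCVine A V →
      IsCVine (A.erase a₁) {S ∈ V | S ⊆ A.erase a₁} ∧
      IsCVine (A.erase a₂) {S ∈ V | S ⊆ A.erase a₂} ∧
      IsCVine (A \ {a₁, a₂})
        ({S ∈ V | S ⊆ A.erase a₁} ∩ {S ∈ V | S ⊆ A.erase a₂})) := by
  have hV' : {S ∈ V | S ⊆ A.erase a₁} ∩ {S ∈ V | S ⊆ A.erase a₂} =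
      {S ∈ V | S ⊆ A \ {a₁, a₂}} := by
    ext S
    rw [← Finset.erase_inter_erase, Set.mem_inter_iff, Set.mem_sep_iff, Set.mem_sep_iff,
      Set.mem_sep_iff, Finset.subset_inter_iff]
    tauto
  rw [hV']
  rcases hV.sdiff_pair_mem_or_eq_empty hne h₁ h₂ with hmem | hempty
  · exact ⟨fun hD => ⟨hD.restrict h₁.1, hD.restrict h₂.1, hD.restrict hmem⟩,
      fun hC => ⟨hC.restrict h₁.1, hC.restrict h₂.1, hC.restrict hmem⟩⟩
  · rw [hempty, hV.restrict_empty]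
    exact ⟨fun hD => ⟨hD.restrict h₁.1, hD.restrict h₂.1, isDVine_empty⟩,
      fun hC => ⟨hC.restrict h₁.1, hC.restrict h₂.1, isCVine_empty⟩⟩
end

section
/- Let V be a regular vine on a finite set A with n = |A| ≥ 2. Then V is a D-vine if and only if there is an enumeration c_1,…,c_n of A such that {c_1,…,c_k} ∈ V and {c_{n−k+1},…,c_n} ∈ V for all 1 ≤ k ≤ n, i.e. both {c_1} ⊆ {c_1,c_2} ⊆ ⋯ ⊆ {c_1,…,c_n} and {c_n} ⊆ {c_{n−1},c_n} ⊆ ⋯ ⊆ {c_1,…,c_n} are maximal chains in V. -/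
variable {α : Type*} [DecidableEq α]

/-!
Fix an enumeration `g` of `A` and call the images of the intervals `[j, j + i)` windows. Both
sides of the equivalence amount to: for every `i`, the elements of `V` of size `i` are exactly
the `n + 1 - i` windows of size `i`. Since the `i`-th tree has the elements of size `i` as
vertices and those of size `i + 1` as edges, `V` has exactly `n + 1 - i` elements of size `i`,
so one inclusion suffices.

If all prefixes and suffixes of `g` lie in `V`, a downward induction on the size puts every
window in `V`: the windows `[j - 1, j + i)` and `[j, j + i + 1)` are both covered by
`[j - 1, j + i + 1)`, so by proximity they cover a common set, which can only be their
intersection `[j, j + i)`. Adjacent vertices of the `i`-th tree are then exactly consecutive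
windows, so each tree is a path.

Conversely, listing the vertices of the first tree, a path, gives `g`, and its edges are the
consecutive pairs. A set of size `i + 1 ≥ 3` in `V` is the union of the two windows of size `i` it
covers; they overlap in `i - 1` points, so they are consecutive and their union is a window.
-/

section RegularVine

variable {β : Type*} {A : Finset β} {V : Set (Finset β)}

lemma coversIn_of_subset_of_card_eq {T S : Finset β} (hT : T ∈ V) (hS : S ∈ V) (hTS : T ⊆ S)
    (hcard : S.card = T.card + 1) : CoversIn V T S := by
  refine ⟨hT, hS, Finset.ssubset_iff_subset_ne.2 ⟨hTS, by rintro rfl; omega⟩,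
    fun U _ hTU hUS => ?_⟩
  have := Finset.card_lt_card hTU
  have := Finset.card_lt_card hUS
  omega

lemma exists_isMaxChainIn_superset (hfin : V.Finite) {C₀ : Set (Finset β)} (hC₀ : C₀ ⊆ V)
    (hchain : IsChain (· ⊆ ·) C₀) : ∃ C, C₀ ⊆ C ∧ IsMaxChainIn V C := by
  have hchains : {C | C ⊆ V ∧ IsChain (· ⊆ ·) C}.Finite :=
    hfin.finite_subsets.subset fun _ hC => hC.1
  obtain ⟨C, hC₀C, hmax⟩ := hchains.exists_le_maximal ⟨hC₀, hchain⟩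
  refine ⟨C, hC₀C, hmax.prop.1, hmax.prop.2, fun S hS hins => ?_⟩
  exact hmax.le_of_ge ⟨Set.insert_subset hS hmax.prop.1, hins⟩ (Set.subset_insert S C)
    (Set.mem_insert S C)

lemma IsRegularVine.finite_s18 (hV : IsRegularVine A V) : V.Finite :=
  A.powerset.finite_toSet.subset fun S hS => Finset.mem_powerset.2 (hV.1 S hS).1

/-- A maximal chain has `|A|` elements of pairwise different sizes in `[1, |A|]`, so it meets
every size. -/
lemma IsRegularVine.exists_mem_card_eq (hV : IsRegularVine A V) {C : Set (Finset β)}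
    (hC : IsMaxChainIn V C) {k : ℕ} (hk : 1 ≤ k) (hkA : k ≤ A.card) : ∃ S ∈ C, S.card = k := by
  have hcardC : C.ncard = A.card := hV.2.1 C hC
  have hinj : Set.InjOn Finset.card C := by
    intro S hS T hT hST
    by_contra hne
    rcases hC.2.1 hS hT hne with h | h
    · exact (Finset.card_lt_card (Finset.ssubset_iff_subset_ne.2 ⟨h, hne⟩)).ne hST
    · exact (Finset.card_lt_card (Finset.ssubset_iff_subset_ne.2 ⟨h, Ne.symm hne⟩)).ne' hST
  have hsizes : Finset.card '' C ⊆ Set.Icc 1 A.card := by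
    rintro _ ⟨S, hS, rfl⟩
    exact ⟨Finset.card_pos.2 (hV.1 S (hC.1 hS)).2, Finset.card_le_card (hV.1 S (hC.1 hS)).1⟩
  have heq : Finset.card '' C = Set.Icc 1 A.card := by
    refine Set.eq_of_subset_of_ncard_le hsizes ?_ (Set.finite_Icc 1 A.card)
    rw [hinj.ncard_image, hcardC, Set.ncard_eq_toFinset_card', Set.toFinset_Icc, Nat.card_Icc]
    omega
  obtain ⟨S, hS, hSk⟩ : k ∈ Finset.card '' C := heq ▸ ⟨hk, hkA⟩
  exact ⟨S, hS, hSk⟩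

lemma IsRegularVine.exists_card_eq_comparable (hV : IsRegularVine A V) {C₀ : Set (Finset β)}
    (hC₀ : C₀ ⊆ V) (hchain : IsChain (· ⊆ ·) C₀) {k : ℕ} (hk : 1 ≤ k) (hkA : k ≤ A.card) :
    ∃ S ∈ V, S.card = k ∧ ∀ T ∈ C₀, S ⊆ T ∨ T ⊆ S := by
  obtain ⟨C, hC₀C, hC⟩ := exists_isMaxChainIn_superset hV.finite_s18 hC₀ hchain
  obtain ⟨S, hS, hSk⟩ := hV.exists_mem_card_eq hC hk hkA
  refine ⟨S, hC.1 hS, hSk, fun T hT => ?_⟩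
  rcases eq_or_ne S T with rfl | hne
  · exact Or.inl subset_rfl
  · exact hC.2.1 hS (hC₀C hT) hne

lemma IsRegularVine.card_eq_of_coversIn (hV : IsRegularVine A V) {T S : Finset β}
    (h : CoversIn V T S) : S.card = T.card + 1 := by
  obtain ⟨hT, hS, hTS, hcov⟩ := h
  have hlt := Finset.card_lt_card hTS
  obtain ⟨U, hU, hUcard, hcomp⟩ := hV.exists_card_eq_comparable
    (Set.insert_subset hT (Set.singleton_subset_iff.2 hS)) (IsChain.pair hTS.1) le_add_self
    (hlt.trans_le (Finset.card_le_card (hV.1 S hS).1))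
  rcases hcomp T (Set.mem_insert T {S}) with hUT | hTU
  · have := Finset.card_le_card hUT
    omega
  rcases hcomp S (Set.mem_insert_of_mem T rfl) with hUS | hSU
  · by_contra hne
    refine hcov U hU (Finset.ssubset_iff_subset_ne.2 ⟨hTU, ?_⟩)
      (Finset.ssubset_iff_subset_ne.2 ⟨hUS, ?_⟩) <;> rintro rfl <;> omega
  · have := Finset.card_le_card hSU
    omega

lemma IsRegularVine.exists_ssubset (hV : IsRegularVine A V) {S : Finset β} (hS : S ∈ V)
    (h2 : 2 ≤ S.card) : ∃ T ∈ V, T ⊂ S := by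
  obtain ⟨T, hT, hTcard, hcomp⟩ := hV.exists_card_eq_comparable (Set.singleton_subset_iff.2 hS)
    Set.subsingleton_singleton.isChain le_rfl
    (one_le_two.trans (h2.trans (Finset.card_le_card (hV.1 S hS).1)))
  rcases hcomp S rfl with hTS | hST
  · exact ⟨T, hT, Finset.ssubset_iff_subset_ne.2 ⟨hTS, by rintro rfl; omega⟩⟩
  · have := Finset.card_le_card hST
    omega

lemma IsRegularVine.exists_coversIn_pair_s18 (hV : IsRegularVine A V) {S : Finset β} (hS : S ∈ V)
    (h2 : 2 ≤ S.card) : ∃ T₁ T₂, T₁ ≠ T₂ ∧ CoversIn V T₁ S ∧ CoversIn V T₂ S := by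
  obtain ⟨T₁, T₂, hne, hpair⟩ := Set.ncard_eq_two.1 (hV.2.2.2.2.1 S hS (hV.exists_ssubset hS h2))
  have h₁ : T₁ ∈ {T | CoversIn V T S} := hpair ▸ Set.mem_insert T₁ {T₂}
  have h₂ : T₂ ∈ {T | CoversIn V T S} := hpair ▸ Set.mem_insert_of_mem T₁ rfl
  exact ⟨T₁, T₂, hne, h₁, h₂⟩

lemma IsRegularVine.eq_or_eq_of_coversIn (hV : IsRegularVine A V) {T₁ T₂ T S : Finset β}
    (h₁ : CoversIn V T₁ S) (h₂ : CoversIn V T₂ S) (hne : T₁ ≠ T₂) (h : CoversIn V T S) :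
    T = T₁ ∨ T = T₂ := by
  obtain ⟨U₁, U₂, -, hpair⟩ :=
    Set.ncard_eq_two.1 (hV.2.2.2.2.1 S h.2.1 ⟨T₁, h₁.1, h₁.2.2.1⟩)
  have h₁' : T₁ ∈ {T | CoversIn V T S} := h₁
  have h₂' : T₂ ∈ {T | CoversIn V T S} := h₂
  have h' : T ∈ {T | CoversIn V T S} := h
  rw [hpair] at h₁' h₂' h'
  simp only [Set.mem_insert_iff, Set.mem_singleton_iff] at h₁' h₂' h'
  grind

lemma IsRegularVine.union_eq_of_coversIn_s18 [DecidableEq β] (hV : IsRegularVine A V)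
    {T₁ T₂ S : Finset β} (h₁ : CoversIn V T₁ S) (h₂ : CoversIn V T₂ S) (hne : T₁ ≠ T₂) :
    T₁ ∪ T₂ = S := by
  have hc₁ := hV.card_eq_of_coversIn h₁
  have hc₂ := hV.card_eq_of_coversIn h₂
  have hT₂ : ¬ T₂ ⊆ T₁ := fun h => hne (Finset.eq_of_subset_of_card_le h (by omega)).symm
  have hlt : T₁ ⊂ T₁ ∪ T₂ := Finset.ssubset_iff_subset_ne.2 ⟨Finset.subset_union_left,
    fun h => hT₂ (h ▸ Finset.subset_union_right)⟩
  exact Finset.eq_of_subset_of_card_le (Finset.union_subset h₁.2.2.1.1 h₂.2.2.1.1)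
    (by have := Finset.card_lt_card hlt; omega)

end RegularVine

section Levels

variable {β : Type*} {A : Finset β} {V : Set (Finset β)}

def level (V : Set (Finset β)) (i : ℕ) : Set (Finset β) := {S | S ∈ V ∧ S.card = i}

lemma IsRegularVine.ncard_level_one (hV : IsRegularVine A V) : (level V 1).ncard = A.card := by
  rw [← hV.2.2.2.1]
  congr 1
  ext S
  refine ⟨fun ⟨hS, hS1⟩ => ⟨hS, fun T hT hTS => ?_⟩, fun hmin => ⟨hmin.1, hV.2.2.1 S hmin⟩⟩
  exact Finset.eq_of_subset_of_card_le hTS (hS1 ▸ Finset.card_pos.2 (hV.1 T hT).2)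

lemma IsRegularVine.ncard_edgeSet_vineGraph [DecidableEq β] (hV : IsRegularVine A V) {i : ℕ}
    (hi : 1 ≤ i) : (vineGraph V i).edgeSet.ncard = (level V (i + 1)).ncard := by
  let join : Sym2 {S // S ∈ V ∧ S.card = i} → Finset β :=
    Sym2.lift ⟨fun u v => u.1 ∪ v.1, fun u v => Finset.union_comm _ _⟩
  have join_eq : ∀ {u v}, (vineGraph V i).Adj u v →
      ∃ W ∈ level V (i + 1), CoversIn V u.1 W ∧ CoversIn V v.1 W ∧ join s(u, v) = W := by
    rintro u v ⟨huv, W, hW, hWcard, hu, hv⟩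
    exact ⟨W, ⟨hW, hWcard⟩, hu, hv,
      hV.union_eq_of_coversIn_s18 hu hv fun h => huv (Subtype.ext h)⟩
  refine Set.ncard_congr (fun e _ => join e) (fun e he => ?_) (fun e e' he he' hee' => ?_)
    (fun W hW => ?_)
  · induction e using Sym2.ind with
    | _ u v =>
      obtain ⟨W, hW, -, -, hjoin⟩ := join_eq he
      exact hjoin ▸ hW
  · induction e using Sym2.ind with
    | _ u v =>
    induction e' using Sym2.ind with
    | _ u' v' =>
      obtain ⟨W, -, hu, hv, hjoin⟩ := join_eq he
      obtain ⟨W', -, hu', hv', hjoin'⟩ := join_eq he'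
      have huv : u.1 ≠ v.1 := fun h => he.1 (Subtype.ext h)
      have huv' : u'.1 ≠ v'.1 := fun h => he'.1 (Subtype.ext h)
      obtain rfl : W = W' := hjoin.symm.trans (hee'.trans hjoin')
      rcases hV.eq_or_eq_of_coversIn hu hv huv hu' with h₁ | h₁ <;>
      rcases hV.eq_or_eq_of_coversIn hu hv huv hv' with h₂ | h₂
      · exact absurd (h₁.trans h₂.symm) huv'
      · rw [show u' = u from Subtype.ext h₁, show v' = v from Subtype.ext h₂]
      · rw [show u' = v from Subtype.ext h₁, show v' = u from Subtype.ext h₂, Sym2.eq_swap]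
      · exact absurd (h₁.trans h₂.symm) huv'
  · obtain ⟨T₁, T₂, hne, h₁, h₂⟩ := hV.exists_coversIn_pair_s18 hW.1 (by rw [hW.2]; omega)
    have hc₁ := hV.card_eq_of_coversIn h₁
    have hc₂ := hV.card_eq_of_coversIn h₂
    let u : {S // S ∈ V ∧ S.card = i} := ⟨T₁, h₁.1, by rw [hW.2] at hc₁; omega⟩
    let v : {S // S ∈ V ∧ S.card = i} := ⟨T₂, h₂.1, by rw [hW.2] at hc₂; omega⟩
    exact ⟨s(u, v), ⟨fun h => hne (congrArg Subtype.val h), W, hW.1, hW.2, h₁, h₂⟩,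
      hV.union_eq_of_coversIn_s18 h₁ h₂ hne⟩

/-- The `i`-th associated tree has the elements of `V` of size `i` as vertices and those of size
`i + 1` as edges. -/
lemma IsRegularVine.ncard_level_eq_succ [DecidableEq β] (hV : IsRegularVine A V) {i : ℕ}
    (hi : 1 ≤ i) (hiA : i ≤ A.card - 1) :
    (level V i).ncard = (level V (i + 1)).ncard + 1 := by
  have hfin : (level V i).Finite := hV.finite_s18.subset fun _ hS => hS.1
  have : Finite {S // S ∈ V ∧ S.card = i} := hfin.to_subtype
  have hcard := (SimpleGraph.isTree_iff_connected_and_card.1 (hV.2.2.2.2.2.1 i hi hiA)).2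
  rw [Nat.card_coe_set_eq, hV.ncard_edgeSet_vineGraph hi] at hcard
  rw [hcard]
  exact (Nat.card_coe_set_eq (level V i)).symm

lemma IsRegularVine.ncard_level [DecidableEq β] (hV : IsRegularVine A V) {i : ℕ} (hi : 1 ≤ i)
    (hiA : i ≤ A.card) : (level V i).ncard = A.card + 1 - i := by
  induction i, hi using Nat.le_induction with
  | base => rw [hV.ncard_level_one]; omega
  | succ i hi ih =>
    have := hV.ncard_level_eq_succ hi (by omega)
    have := ih (by omega)
    omega

end Levels

section Windows

lemma Finset.coe_Ico_subset_Iio {a b n : ℕ} (h : b ≤ n) : (Finset.Ico a b : Set ℕ) ⊆ Set.Iio n := by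
  rw [Finset.coe_Ico]
  exact Set.Ico_subset_Iio_self.trans (Set.Iio_subset_Iio h)

variable {β : Type*} [DecidableEq β] {g : ℕ → β} {n i j k l : ℕ}

def window (g : ℕ → β) (j i : ℕ) : Finset β := (Finset.Ico j (j + i)).image g

def windows (g : ℕ → β) (n i : ℕ) : Set (Finset β) := (window g · i) '' {j | j + i ≤ n}

lemma window_one (g : ℕ → β) (j : ℕ) : window g j 1 = {g j} := by
  rw [window, Nat.Ico_succ_singleton, Finset.image_singleton]

lemma window_succ (g : ℕ → β) (j : ℕ) (hi : 1 ≤ i) :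
    window g j (i + 1) = window g j i ∪ window g (j + 1) i := by
  rw [window, window, window, ← Finset.image_union]
  congr 1
  ext t
  simp only [Finset.mem_Ico, Finset.mem_union]
  omega

lemma card_window (hg : Set.InjOn g (Set.Iio n)) (h : j + i ≤ n) : (window g j i).card = i := by
  rw [window, Finset.card_image_of_injOn (hg.mono (Finset.coe_Ico_subset_Iio h)), Nat.card_Ico]
  omega

lemma window_subset_window_iff (hg : Set.InjOn g (Set.Iio n)) (hi : 0 < i) (hj : j + i ≤ n)
    (hk : k + l ≤ n) : window g j i ⊆ window g k l ↔ k ≤ j ∧ j + i ≤ k + l := by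
  rw [← Finset.coe_subset, window, window, Finset.coe_image, Finset.coe_image,
    hg.image_subset_image_iff (Finset.coe_Ico_subset_Iio hj) (Finset.coe_Ico_subset_Iio hk),
    Finset.coe_subset, Finset.Ico_subset_Ico_iff (by omega)]

lemma window_injective (hg : Set.InjOn g (Set.Iio n)) (hi : 0 < i) (hj : j + i ≤ n)
    (hk : k + i ≤ n) (h : window g j i = window g k i) : j = k := by
  have := (window_subset_window_iff hg hi hj hk).1 h.le
  have := (window_subset_window_iff hg hi hk hj).1 h.ge
  omega

lemma window_inter_window (hg : Set.InjOn g (Set.Iio n)) (hj : j + i ≤ n) (hk : k + l ≤ n) :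
    window g j i ∩ window g k l = (Finset.Ico (max j k) (min (j + i) (k + l))).image g := by
  rw [window, window, ← Finset.image_inter_of_injOn, Finset.Ico_inter_Ico]
  exact hg.mono (Set.union_subset (Finset.coe_Ico_subset_Iio hj) (Finset.coe_Ico_subset_Iio hk))

lemma card_window_inter_window (hg : Set.InjOn g (Set.Iio n)) (hj : j + i ≤ n)
    (hk : k + l ≤ n) :
    (window g j i ∩ window g k l).card = min (j + i) (k + l) - max j k := by
  rw [window_inter_window hg hj hk, Finset.card_image_of_injOn, Nat.card_Ico]
  exact hg.mono (Finset.coe_Ico_subset_Iio (by omega))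

lemma finite_windows (g : ℕ → β) (n i : ℕ) : (windows g n i).Finite :=
  ((Set.finite_Iic n).subset fun j (hj : j + i ≤ n) => by rw [Set.mem_Iic]; omega).image _

lemma ncard_windows (hg : Set.InjOn g (Set.Iio n)) (hi : 0 < i) :
    (windows g n i).ncard = n + 1 - i := by
  have hIio : {j | j + i ≤ n} = Set.Iio (n + 1 - i) := by
    ext j
    simp only [Set.mem_ofPred_eq, Set.mem_Iio]
    omega
  rw [windows, Set.InjOn.ncard_image, hIio, Set.ncard_eq_toFinset_card', Set.toFinset_Iio,
    Nat.card_Iio]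
  exact fun j hj k hk h => window_injective hg hi hj hk h

end Windows

section PathGraph

variable {β : Type*} {G : SimpleGraph β}

lemma List.Nodup.exists_consecutive_iff {l : List β} (hl : l.Nodup) {i j : ℕ}
    (hi : i < l.length) (hj : j < l.length) :
    (∃ m, (l[m]? = some l[i] ∧ l[m + 1]? = some l[j]) ∨
        (l[m]? = some l[j] ∧ l[m + 1]? = some l[i])) ↔ j = i + 1 ∨ i = j + 1 := by
  have key : ∀ {m k} (hk : k < l.length), l[m]? = some l[k] ↔ m = k := fun hk => by
    rw [← List.getElem?_eq_getElem hk, eq_comm, List.getElem?_inj hk hl, eq_comm]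
  simp only [key hi, key hj]
  constructor
  · rintro ⟨m, ⟨rfl, rfl⟩ | ⟨rfl, rfl⟩⟩ <;> omega
  · rintro (rfl | rfl)
    exacts [⟨i, Or.inl ⟨rfl, rfl⟩⟩, ⟨j, Or.inr ⟨rfl, rfl⟩⟩]

lemma isPathGraph_iff_getElem : IsPathGraph G ↔ ∃ l : List β, l.Nodup ∧ (∀ v, v ∈ l) ∧
    ∀ i j (hi : i < l.length) (hj : j < l.length), G.Adj l[i] l[j] ↔ j = i + 1 ∨ i = j + 1 := by
  refine exists_congr fun l => and_congr_right fun hl => and_congr_right fun hall => ?_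
  constructor
  · intro hadj i j hi hj
    rw [hadj, hl.exists_consecutive_iff hi hj]
  · intro hadj u v
    obtain ⟨i, hi, rfl⟩ := List.mem_iff_getElem.1 (hall u)
    obtain ⟨j, hj, rfl⟩ := List.mem_iff_getElem.1 (hall v)
    rw [hadj i j hi hj, hl.exists_consecutive_iff hi hj]

end PathGraph

section Backward

variable {β : Type*} [DecidableEq β] {A : Finset β} {V : Set (Finset β)} {g : ℕ → β}
  {n i j : ℕ}

lemma vineGraph_adj_window_window_succ (hg : Set.InjOn g (Set.Iio n)) (hi : 1 ≤ i)
    (hj : j + i + 1 ≤ n) (hW : window g j (i + 1) ∈ V) (h₁ : window g j i ∈ V)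
    (h₂ : window g (j + 1) i ∈ V) :
    (vineGraph V i).Adj ⟨window g j i, h₁, card_window hg (by omega)⟩
      ⟨window g (j + 1) i, h₂, card_window hg (by omega)⟩ := by
  refine ⟨fun h => ?_, _, hW, card_window hg (by omega), ?_, ?_⟩
  · have := window_injective hg hi (by omega) (by omega) (congrArg Subtype.val h)
    omega
  · exact coversIn_of_subset_of_card_eq h₁ hW (window_succ g j hi ▸ Finset.subset_union_left)
      (by rw [card_window hg (by omega : j + (i + 1) ≤ n), card_window hg (by omega)])
  · exact coversIn_of_subset_of_card_eq h₂ hW (window_succ g j hi ▸ Finset.subset_union_right)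
      (by rw [card_window hg (by omega : j + (i + 1) ≤ n), card_window hg (by omega)])

lemma IsRegularVine.window_mem_of_proximity (hV : IsRegularVine A V)
    (hg : Set.InjOn g (Set.Iio n)) (hi : 1 ≤ i) (hn : j + i + 2 ≤ n)
    (h : window g j (i + 2) ∈ V) (h₁ : window g j (i + 1) ∈ V)
    (h₂ : window g (j + 1) (i + 1) ∈ V) : window g (j + 1) i ∈ V := by
  obtain ⟨hne, W, -, -, hc₁, hc₂⟩ :=
    vineGraph_adj_window_window_succ hg (by omega : 1 ≤ i + 1) hn h h₁ h₂
  obtain ⟨U, hU₁, hU₂⟩ := hV.2.2.2.2.2.2 _ h₁ _ h₂ (fun heq => hne (Subtype.ext heq))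
    (by rw [card_window hg (by omega), card_window hg (by omega)])
    (by rw [card_window hg (by omega)]; omega) ⟨_, hc₁, hc₂⟩
  have hU : U ⊆ window g (j + 1) i := by
    have := Finset.subset_inter hU₁.2.2.1.1 hU₂.2.2.1.1
    rwa [window_inter_window hg (by omega) (by omega), max_eq_right (by omega),
      min_eq_left (by omega), show j + (i + 1) = j + 1 + i by omega] at this
  have hUcard := hV.card_eq_of_coversIn hU₁
  rw [card_window hg (by omega)] at hUcard
  rw [← Finset.eq_of_subset_of_card_le hU (by rw [card_window hg (by omega)]; omega)]
  exact hU₁.1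

lemma IsRegularVine.window_mem_of_ends (hV : IsRegularVine A V)
    (hg : Set.InjOn g (Set.Iio A.card))
    (hends : ∀ k, 1 ≤ k → k ≤ A.card → window g 0 k ∈ V ∧ window g (A.card - k) k ∈ V)
    (hi : 1 ≤ i) (hij : j + i ≤ A.card) : window g j i ∈ V := by
  induction hd : A.card - i using Nat.strong_induction_on generalizing i j with
  | _ d ih =>
  rcases Nat.eq_zero_or_pos j with rfl | hj
  · exact (hends i hi (by omega)).1
  rcases eq_or_lt_of_le hij with hij | hij
  · obtain rfl : j = A.card - i := by omega
    exact (hends i hi (by omega)).2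
  obtain ⟨j, rfl⟩ : ∃ j', j = j' + 1 := ⟨j - 1, by omega⟩
  exact hV.window_mem_of_proximity hg hi (by omega)
    (ih _ (by omega) (by omega) (by omega) rfl) (ih _ (by omega) (by omega) (by omega) rfl)
    (ih _ (by omega) (by omega) (by omega) rfl)

lemma IsRegularVine.level_eq_windows_of_ends (hV : IsRegularVine A V)
    (hg : Set.InjOn g (Set.Iio A.card))
    (hends : ∀ k, 1 ≤ k → k ≤ A.card → window g 0 k ∈ V ∧ window g (A.card - k) k ∈ V)
    (hi : 1 ≤ i) (hiA : i ≤ A.card) : level V i = windows g A.card i := by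
  have hsub : windows g A.card i ⊆ level V i := by
    rintro _ ⟨j, hj, rfl⟩
    exact ⟨hV.window_mem_of_ends hg hends hi hj, card_window hg hj⟩
  refine (Set.eq_of_subset_of_ncard_le hsub ?_ (hV.finite_s18.subset fun _ hS => hS.1)).symm
  rw [hV.ncard_level hi hiA, ncard_windows hg hi]

lemma isPathGraph_vineGraph_of_level_eq_windows (hg : Set.InjOn g (Set.Iio n)) (hi : 1 ≤ i)
    (hin : i + 1 ≤ n) (hlevel : level V i = windows g n i)
    (hlevel' : level V (i + 1) = windows g n (i + 1)) : IsPathGraph (vineGraph V i) := by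
  have hmem : ∀ {j}, j + i ≤ n → window g j i ∈ V := fun hj =>
    (hlevel ▸ ⟨_, hj, rfl⟩ : window g _ i ∈ level V i).1
  have hmem' : ∀ {j}, j + (i + 1) ≤ n → window g j (i + 1) ∈ V := fun hj =>
    (hlevel' ▸ ⟨_, hj, rfl⟩ : window g _ (i + 1) ∈ level V (i + 1)).1
  let f : Fin (n + 1 - i) → {S // S ∈ V ∧ S.card = i} := fun j =>
    ⟨window g j i, hmem (by have := j.2; omega), card_window hg (by have := j.2; omega)⟩
  have hf : Function.Injective f := fun j k hjk =>
    Fin.ext (window_injective hg hi (by have := j.2; omega) (by have := k.2; omega)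
      (congrArg Subtype.val hjk))
  refine isPathGraph_iff_getElem.2 ⟨List.ofFn f, List.nodup_ofFn.2 hf, fun v => ?_,
    fun j k hj hk => ?_⟩
  · obtain ⟨j, hj : j + i ≤ n, hv⟩ : v.1 ∈ windows g n i := hlevel ▸ v.2
    exact List.mem_ofFn.2 ⟨⟨j, by omega⟩, Subtype.ext hv⟩
  simp only [List.length_ofFn] at hj hk
  simp only [List.getElem_ofFn, f]
  constructor
  · rintro ⟨hne, W, hW, hWcard, hj', hk'⟩
    obtain ⟨m, hm : m + (i + 1) ≤ n, rfl⟩ : W ∈ windows g n (i + 1) := hlevel' ▸ ⟨hW, hWcard⟩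
    have := (window_subset_window_iff hg hi (by omega) hm).1 hj'.2.2.1.1
    have := (window_subset_window_iff hg hi (by omega) hm).1 hk'.2.2.1.1
    have : j ≠ k := by rintro rfl; exact hne rfl
    omega
  · rintro (rfl | rfl)
    · exact vineGraph_adj_window_window_succ hg hi (by omega) (hmem' (by omega))
        (hmem (by omega)) (hmem (by omega))
    · exact (vineGraph_adj_window_window_succ hg hi (by omega) (hmem' (by omega))
        (hmem (by omega)) (hmem (by omega))).symm

end Backward

section Forward

variable {β : Type*} [DecidableEq β] {A : Finset β} {V : Set (Finset β)} {g : ℕ → β} {i : ℕ}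

/-- Two windows of size `i ≥ 2` whose union has size `i + 1` overlap in `i - 1` elements, so they
are consecutive. -/
lemma IsRegularVine.level_succ_eq_windows (hV : IsRegularVine A V)
    (hg : Set.InjOn g (Set.Iio A.card)) (hi : 2 ≤ i) (hiA : i + 1 ≤ A.card)
    (hlevel : level V i = windows g A.card i) :
    level V (i + 1) = windows g A.card (i + 1) := by
  have hsub : level V (i + 1) ⊆ windows g A.card (i + 1) := by
    rintro S ⟨hS, hScard⟩
    obtain ⟨T₁, T₂, hne, h₁, h₂⟩ := hV.exists_coversIn_pair_s18 hS (by omega)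
    have hc₁ := hV.card_eq_of_coversIn h₁
    have hc₂ := hV.card_eq_of_coversIn h₂
    have hunion := hV.union_eq_of_coversIn_s18 h₁ h₂ hne
    obtain ⟨j, hj : j + i ≤ A.card, rfl⟩ : T₁ ∈ windows g A.card i := hlevel ▸ ⟨h₁.1, by omega⟩
    obtain ⟨k, hk : k + i ≤ A.card, rfl⟩ : T₂ ∈ windows g A.card i := hlevel ▸ ⟨h₂.1, by omega⟩
    have hcard := Finset.card_union_add_card_inter (window g j i) (window g k i)
    rw [hunion, hScard, card_window_inter_window hg hj hk, card_window hg hj,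
      card_window hg hk] at hcard
    have hjk : j ≠ k := by rintro rfl; exact hne rfl
    rcases lt_or_gt_of_ne hjk with hjk | hjk
    · obtain rfl : k = j + 1 := by omega
      exact ⟨j, (by omega : j + (i + 1) ≤ A.card), (window_succ g j (by omega)).trans hunion⟩
    · obtain rfl : j = k + 1 := by omega
      exact ⟨k, (by omega : k + (i + 1) ≤ A.card),
        (window_succ g k (by omega)).trans ((Finset.union_comm _ _).trans hunion)⟩
  refine Set.eq_of_subset_of_ncard_le hsub ?_ (finite_windows g _ _)
  rw [ncard_windows hg (by omega), hV.ncard_level (by omega) hiA]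

lemma IsRegularVine.exists_level_one_eq_windows (hV : IsRegularVine A V) (hA : 0 < A.card)
    (hpath : IsPathGraph (vineGraph V 1)) :
    ∃ g : ℕ → β, Set.InjOn g (Set.Iio A.card) ∧ level V 1 = windows g A.card 1 ∧
      ∀ u v, (vineGraph V 1).Adj u v → ∃ j, j + 2 ≤ A.card ∧ window g j 2 = u.1 ∪ v.1 := by
  obtain ⟨l, hl, hall, hadj⟩ := isPathGraph_iff_getElem.1 hpath
  obtain ⟨a₀, -⟩ := Finset.card_pos.1 hA
  have hsingleton : ∀ t, ∃ a : β, ∀ ht : t < l.length, l[t].1 = {a} := fun t => by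
    by_cases ht : t < l.length
    · obtain ⟨a, ha⟩ := Finset.card_eq_one.1 l[t].2.2
      exact ⟨a, fun _ => ha⟩
    · exact ⟨a₀, fun h => absurd h ht⟩
  choose g hg using hsingleton
  have hinj : Set.InjOn g (Set.Iio l.length) := fun s hs t ht hst =>
    hl.getElem_inj_iff.1 (Subtype.ext ((hg s hs).trans (hst ▸ (hg t ht).symm)))
  have hlevel₁ : level V 1 = windows g l.length 1 := by
    ext S
    constructor
    · intro hS
      obtain ⟨t, ht, hSt⟩ := List.mem_iff_getElem.1 (hall ⟨S, hS⟩)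
      exact ⟨t, ht, show window g t 1 = S by rw [window_one, ← hg t ht, hSt]⟩
    · rintro ⟨t, ht : t + 1 ≤ l.length, rfl⟩
      show window g t 1 ∈ level V 1
      rw [window_one, ← hg t ht]
      exact l[t].2
  have hlen : l.length = A.card := by
    have := hV.ncard_level_one
    rw [hlevel₁, ncard_windows hinj one_pos] at this
    omega
  refine ⟨g, hlen ▸ hinj, hlen ▸ hlevel₁, fun u v huv => ?_⟩
  obtain ⟨j, hj, rfl⟩ := List.mem_iff_getElem.1 (hall u)
  obtain ⟨k, hk, rfl⟩ := List.mem_iff_getElem.1 (hall v)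
  rw [hg j hj, hg k hk]
  rcases (hadj j k hj hk).1 huv with rfl | rfl
  · refine ⟨j, by omega, ?_⟩
    rw [show 2 = 1 + 1 from rfl, window_succ g j le_rfl, window_one, window_one]
  · refine ⟨k, by omega, ?_⟩
    rw [show 2 = 1 + 1 from rfl, window_succ g k le_rfl, window_one, window_one,
      Finset.union_comm]

lemma IsRegularVine.level_two_eq_windows (hV : IsRegularVine A V) (hA : 2 ≤ A.card)
    (hg : Set.InjOn g (Set.Iio A.card))
    (hedge : ∀ u v, (vineGraph V 1).Adj u v → ∃ j, j + 2 ≤ A.card ∧ window g j 2 = u.1 ∪ v.1) :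
    level V 2 = windows g A.card 2 := by
  have hsub : level V 2 ⊆ windows g A.card 2 := by
    rintro S ⟨hS, hScard⟩
    obtain ⟨T₁, T₂, hne, h₁, h₂⟩ := hV.exists_coversIn_pair_s18 hS (by omega)
    have hc₁ := hV.card_eq_of_coversIn h₁
    have hc₂ := hV.card_eq_of_coversIn h₂
    obtain ⟨j, hj, hjS⟩ := hedge ⟨T₁, h₁.1, by omega⟩ ⟨T₂, h₂.1, by omega⟩
      ⟨fun h => hne (congrArg Subtype.val h), S, hS, hScard, h₁, h₂⟩
    exact ⟨j, hj, hjS.trans (hV.union_eq_of_coversIn_s18 h₁ h₂ hne)⟩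
  refine Set.eq_of_subset_of_ncard_le hsub ?_ (finite_windows g _ _)
  rw [ncard_windows hg two_pos, hV.ncard_level one_le_two hA]

lemma IsDVine.exists_level_eq_windows (hD : IsDVine A V) (hA : 2 ≤ A.card) :
    ∃ g : ℕ → β, Set.InjOn g (Set.Iio A.card) ∧
      ∀ i, 1 ≤ i → i ≤ A.card → level V i = windows g A.card i := by
  obtain ⟨g, hg, hlevel₁, hedge⟩ :=
    hD.1.exists_level_one_eq_windows (by omega) (hD.2 1 le_rfl (by omega))
  refine ⟨g, hg, fun i hi hiA => ?_⟩
  induction i, hi using Nat.le_induction with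
  | base => exact hlevel₁
  | succ i hi ih =>
    rcases eq_or_lt_of_le hi with rfl | hi
    · exact hD.1.level_two_eq_windows hA hg hedge
    · exact hD.1.level_succ_eq_windows hg hi hiA (ih (by omega))

end Forward

section Enumerations

variable {β : Type*} {g : ℕ → β} {n : ℕ}

lemma nodup_map_range_iff : ((List.range n).map g).Nodup ↔ Set.InjOn g (Set.Iio n) := by
  rw [List.nodup_map_iff_inj_on List.nodup_range]
  simp only [List.mem_range, Set.InjOn, Set.mem_Iio]

lemma List.map_getD_range (c : List β) (a₀ : β) :
    (List.range c.length).map (c.getD · a₀) = c :=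
  List.ext_getElem (by simp) fun t _ ht => by simp [List.getElem?_eq_getElem ht]

variable [DecidableEq β]

lemma toFinset_take_map_range (g : ℕ → β) {k : ℕ} (hk : k ≤ n) :
    (((List.range n).map g).take k).toFinset = window g 0 k := by
  ext a
  simp only [← List.map_take, List.take_range, List.mem_toFinset, List.mem_map, List.mem_range,
    window, Finset.mem_image, Finset.mem_Ico]
  exact exists_congr fun t => and_congr_left fun _ => by omega

lemma toFinset_drop_map_range (g : ℕ → β) (j : ℕ) :
    (((List.range n).map g).drop j).toFinset = window g j (n - j) := by
  ext a
  simp only [← List.map_drop, List.range_eq_range', List.drop_range', List.mem_toFinset,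
    List.mem_map, List.mem_range'_1, window, Finset.mem_image, Finset.mem_Ico]
  exact exists_congr fun t => and_congr_left fun _ => by omega

lemma exists_window_mem_of_take_drop_mem {A : Finset β} {V : Set (Finset β)} {c : List β}
    (hc : c.Nodup) (hcA : c.toFinset = A) (hA : 0 < A.card)
    (hends : ∀ k, 1 ≤ k → k ≤ A.card →
      (c.take k).toFinset ∈ V ∧ (c.drop (A.card - k)).toFinset ∈ V) :
    ∃ g : ℕ → β, Set.InjOn g (Set.Iio A.card) ∧
      ∀ k, 1 ≤ k → k ≤ A.card → window g 0 k ∈ V ∧ window g (A.card - k) k ∈ V := by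
  have hlen : c.length = A.card := by rw [← hcA, List.toFinset_card_of_nodup hc]
  obtain ⟨a₀, -⟩ := Finset.card_pos.1 hA
  have hcg : c = (List.range A.card).map (c.getD · a₀) := by
    rw [← hlen]
    exact (List.map_getD_range c a₀).symm
  refine ⟨(c.getD · a₀), nodup_map_range_iff.1 (hcg ▸ hc), fun k hk hkA => ?_⟩
  have := hends k hk hkA
  rwa [hcg, toFinset_take_map_range _ hkA, toFinset_drop_map_range,
    Nat.sub_sub_self hkA] at this

end Enumerations

/-- A regular vine `V` on `A` with `|A| ≥ 2` is a D-vine if and only if, after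
a suitable enumeration `c₁, …, cₙ` of `A`, both
`{c₁} ⊆ {c₁, c₂} ⊆ ⋯ ⊆ A` and `{cₙ} ⊆ {cₙ₋₁, cₙ} ⊆ ⋯ ⊆ A` are (maximal)
chains in `V`. -/
theorem dvine_iff_two_chains (A : Finset α) (V : Set (Finset α))
    (hV : IsRegularVine A V) (hA : 2 ≤ A.card) :
    IsDVine A V ↔
      ∃ c : List α, c.Nodup ∧ c.toFinset = A ∧
        ∀ k : ℕ, 1 ≤ k → k ≤ A.card →
          (c.take k).toFinset ∈ V ∧ (c.drop (A.card - k)).toFinset ∈ V := by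
  constructor
  · intro hD
    obtain ⟨g, hg, hlevel⟩ := hD.exists_level_eq_windows hA
    have hwindow : ∀ {j i}, 1 ≤ i → j + i ≤ A.card → window g j i ∈ V := by
      intro j i hi hji
      have : window g j i ∈ level V i := by rw [hlevel i hi (by omega)]; exact ⟨j, hji, rfl⟩
      exact this.1
    refine ⟨(List.range A.card).map g, nodup_map_range_iff.2 hg, ?_, fun k hk hkA => ?_⟩
    · rw [← List.drop_zero (l := List.map g _), toFinset_drop_map_range, Nat.sub_zero]
      exact Finset.eq_of_subset_of_card_le (hV.1 _ (hwindow (by omega) (by omega))).1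
        (card_window hg (by omega)).ge
    · rw [toFinset_take_map_range g hkA, toFinset_drop_map_range, Nat.sub_sub_self hkA]
      exact ⟨hwindow hk (by omega), hwindow hk (by omega)⟩
  · rintro ⟨c, hc, hcA, hends⟩
    obtain ⟨g, hg, hends'⟩ := exists_window_mem_of_take_drop_mem hc hcA (by omega) hends
    exact ⟨hV, fun i hi hiA => isPathGraph_vineGraph_of_level_eq_windows hg hi (by omega)
      (hV.level_eq_windows_of_ends hg hends' hi (by omega))
      (hV.level_eq_windows_of_ends hg hends' (by omega) (by omega))⟩
end
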